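/- Let l be a symmetric norm on R^n with l(e_i) = 1, and let xi^(n) = (1/sqrt(n))(1,1,...,1). Then there are absolute constants lambda_1, lambda_2 > 0 (independent of n and l) such that lambda_1 * M_l / sqrt(log n) <= l(xi^(n)) <= lambda_2 * M_l, where M_l is the median of l on the Euclidean unit sphere S^{n-1}, provided mmc(l) <= gamma*sqrt(n) for a sufficiently small universal constant gamma. -/

import Mathlib

open MeasureTheory Metric
open scoped ENNReal

/-- The uniform (Haar) probability measure on the unit Euclidean sphere in `ℝ^n`. -/
noncomputable def uniformSphere (n : ℕ) :
    Measure (sphere (0 : EuclideanSpace ℝ (Fin n)) 1) :=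
  ((volume : Measure (EuclideanSpace ℝ (Fin n))).toSphere Set.univ)⁻¹ •
    (volume : Measure (EuclideanSpace ℝ (Fin n))).toSphere

/-- The restriction of a norm on `ℝ^n` to vectors supported on the first `k`
coordinates, viewed as a function on `ℝ^k`. -/
noncomputable def restrictNorm {n : ℕ} (l : EuclideanSpace ℝ (Fin n) → ℝ) (k : ℕ) :
    EuclideanSpace ℝ (Fin k) → ℝ :=
  fun y => l (WithLp.toLp 2 (fun i : Fin n => if h : (i : ℕ) < k then y ⟨i, h⟩ else 0))

/-! A symmetric norm is monotone in the absolute values of the coordinates, so it is controlled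
by the flat vector `ξ` through the `ℓ₁` and `ℓ∞` norms: averaging the cyclic shifts of `|x|`
gives `‖x‖₁ · l ξ ≤ √n · l x`, and `‖x‖_∞ ≤ t` gives `l x ≤ t √n · l ξ`.
On the sphere, `‖x‖₁ ≥ √n / 6` with probability at least `3/4` (the `ℓ₁`-ball is small
compared with the cube inside the Euclidean ball), so a point with `l x ≤ M` yields
`l ξ ≤ 6 M`. Likewise, for `n ≥ 64`, `‖x‖_∞ ≤ 2 √(log n / n)` with probability at least `3/4`
(the cap bound `exp (-n t² / 2)` and a union bound over the `2n` coordinate caps), so a point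
with `l x ≥ M` yields `M ≤ 2 √(log n) · l ξ`. -/

open Finset Real
open scoped Pointwise Nat

noncomputable def flatVector (n : ℕ) : EuclideanSpace ℝ (Fin n) :=
  WithLp.toLp 2 fun _ => 1 / √n

section SymmetricSeminorm

variable {n : ℕ} (p : Seminorm ℝ (EuclideanSpace ℝ (Fin n)))

theorem Seminorm.apply_update_mul_le
    (habs : ∀ x : EuclideanSpace ℝ (Fin n), p (WithLp.toLp 2 fun i => |x i|) = p x)
    (x : EuclideanSpace ℝ (Fin n)) (j : Fin n) {t : ℝ} (ht : |t| ≤ 1) :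
    p (WithLp.toLp 2 (Function.update x j (t * x j))) ≤ p x := by
  set xflip : EuclideanSpace ℝ (Fin n) := WithLp.toLp 2 (Function.update x j (-x j))
  have hflip : p xflip = p x := by
    rw [← habs xflip, ← habs x]
    congr 2
    ext i
    rcases eq_or_ne i j with rfl | h <;> simp [xflip, *]
  have hsplit : (WithLp.toLp 2 (Function.update x j (t * x j)) : EuclideanSpace ℝ (Fin n)) =
      ((1 + t) / 2) • x + ((1 - t) / 2) • xflip := by
    ext i
    rcases eq_or_ne i j with rfl | h <;> simp [xflip, *] <;> ring
  obtain ⟨ht₁, ht₂⟩ := abs_le.mp ht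
  calc _ ≤ p (((1 + t) / 2) • x) + p (((1 - t) / 2) • xflip) := hsplit ▸ map_add_le_add p _ _
    _ = p x := by
      rw [map_smul_eq_mul, map_smul_eq_mul, hflip, Real.norm_of_nonneg (by linarith),
        Real.norm_of_nonneg (by linarith)]
      ring

theorem Seminorm.apply_le_of_abs_le
    (habs : ∀ x : EuclideanSpace ℝ (Fin n), p (WithLp.toLp 2 fun i => |x i|) = p x)
    {x y : EuclideanSpace ℝ (Fin n)} (h : ∀ i, |y i| ≤ |x i|) : p y ≤ p x := by
  classical
  let mix (s : Finset (Fin n)) : EuclideanSpace ℝ (Fin n) :=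
    WithLp.toLp 2 fun i => if i ∈ s then y i else x i
  have hmix : ∀ s, p (mix s) ≤ p x := by
    intro s
    induction s using Finset.induction_on with
    | empty => simp [mix]
    | insert j s hj ih =>
      -- `y j / x j` is the right ratio even when `x j = 0`, because then `y j = 0` too
      have hyj : y j = y j / x j * x j := by
        rcases eq_or_ne (x j) 0 with h0 | h0
        · simpa [h0] using h j
        · field_simp
      have hstep : mix (insert j s) =
          WithLp.toLp 2 (Function.update (mix s) j (y j / x j * mix s j)) := by
        ext i
        rcases eq_or_ne i j with rfl | h
        · simpa [mix, hj] using hyj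
        · simp [mix, h]
      have hratio : |y j / x j| ≤ 1 := by
        rw [abs_div]; exact div_le_one_of_le₀ (h j) (abs_nonneg _)
      exact hstep ▸ (p.apply_update_mul_le habs (mix s) j hratio).trans ih
  simpa [mix] using hmix univ

theorem Seminorm.apply_toLp_const (c : ℝ) :
    p (WithLp.toLp 2 fun _ => c) = |c| * √n * p (flatVector n) := by
  have : (WithLp.toLp 2 fun _ => c : EuclideanSpace ℝ (Fin n)) = (c * √n) • flatVector n := by
    ext i
    have : (0 : ℝ) < n := by exact_mod_cast i.pos
    simp [flatVector, (sqrt_pos.mpr this).ne']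
  rw [this, map_smul_eq_mul, Real.norm_eq_abs, abs_mul, abs_of_nonneg (sqrt_nonneg _)]

theorem Seminorm.apply_le_of_abs_le_const [NeZero n]
    (habs : ∀ x : EuclideanSpace ℝ (Fin n), p (WithLp.toLp 2 fun i => |x i|) = p x)
    {x : EuclideanSpace ℝ (Fin n)} {t : ℝ} (h : ∀ i, |x i| ≤ t) :
    p x ≤ t * √n * p (flatVector n) := by
  have ht : 0 ≤ t := (abs_nonneg _).trans (h 0)
  calc p x ≤ p (WithLp.toLp 2 fun _ => t) :=
        p.apply_le_of_abs_le habs fun i => (h i).trans (le_abs_self t)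
    _ = t * √n * p (flatVector n) := by rw [p.apply_toLp_const, abs_of_nonneg ht]

theorem Seminorm.sum_abs_mul_apply_flatVector_le [NeZero n]
    (habs : ∀ x : EuclideanSpace ℝ (Fin n), p (WithLp.toLp 2 fun i => |x i|) = p x)
    (hperm : ∀ (σ : Equiv.Perm (Fin n)) (x : EuclideanSpace ℝ (Fin n)),
      p (WithLp.toLp 2 fun i => x (σ i)) = p x)
    (x : EuclideanSpace ℝ (Fin n)) :
    (∑ j, |x j|) * p (flatVector n) ≤ √n * p x := by
  let shift (k : Fin n) : EuclideanSpace ℝ (Fin n) := WithLp.toLp 2 fun i => |x (k + i)|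
  have hsum : (WithLp.toLp 2 fun _ => ∑ j, |x j| : EuclideanSpace ℝ (Fin n)) = ∑ k, shift k := by
    ext i
    simp only [shift, WithLp.ofLp_sum, Finset.sum_apply]
    exact (Equiv.sum_comp (Equiv.addRight i) _).symm
  have hshift (k : Fin n) : p (shift k) = p x := by
    rw [habs (WithLp.toLp 2 fun i => x (k + i))]
    exact hperm (Equiv.addLeft k) x
  have hn : (0 : ℝ) < √n := sqrt_pos.mpr (by exact_mod_cast Nat.pos_of_neZero n)
  have key : (∑ j, |x j|) * √n * p (flatVector n) ≤ √n * (√n * p x) :=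
    calc (∑ j, |x j|) * √n * p (flatVector n)
        = p (∑ k, shift k) := by
          rw [← hsum, p.apply_toLp_const, abs_of_nonneg (sum_nonneg fun j _ => abs_nonneg _)]
      _ ≤ ∑ k, p (shift k) := le_sum_of_subadditive p (map_zero p).le (map_add_le_add p) _ _
      _ = √n * (√n * p x) := by
          simp only [hshift, sum_const, card_univ, Fintype.card_fin, nsmul_eq_mul]
          rw [← mul_assoc, mul_self_sqrt (Nat.cast_nonneg n)]
  exact le_of_mul_le_mul_right (by linarith) hn

end SymmetricSeminorm

section UniformSphere

variable {n : ℕ}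

theorem uniformSphere_le_of_volume_cone_le [NeZero n]
    {A : Set (sphere (0 : EuclideanSpace ℝ (Fin n)) 1)} (hA : MeasurableSet A) {B : ℝ≥0∞}
    (h : volume (Set.Ioo (0 : ℝ) 1 • (Subtype.val '' A)) ≤
      B * volume (ball (0 : EuclideanSpace ℝ (Fin n)) 1)) :
    uniformSphere n A ≤ B := by
  set V := volume (ball (0 : EuclideanSpace ℝ (Fin n)) 1)
  have hnV₀ : (n : ℝ≥0∞) * V ≠ 0 :=
    mul_ne_zero (by exact_mod_cast NeZero.ne n) (measure_ball_pos _ _ one_pos).ne'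
  have hnV : (n : ℝ≥0∞) * V ≠ ⊤ :=
    ENNReal.mul_ne_top (ENNReal.natCast_ne_top n) measure_ball_lt_top.ne
  rw [uniformSphere, Measure.smul_apply, smul_eq_mul, Measure.toSphere_apply_univ,
    Measure.toSphere_apply' _ hA, finrank_euclideanSpace_fin]
  calc ((n : ℝ≥0∞) * V)⁻¹ * (n * volume (Set.Ioo (0 : ℝ) 1 • (Subtype.val '' A)))
      ≤ ((n : ℝ≥0∞) * V)⁻¹ * (n * (B * V)) := by gcongr
    _ = B * (((n : ℝ≥0∞) * V)⁻¹ * (n * V)) := by ring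
    _ = B := by rw [ENNReal.inv_mul_cancel hnV₀ hnV, mul_one]

theorem uniformSphere_cap_le [NeZero n] {v : EuclideanSpace ℝ (Fin n)} (hv : ‖v‖ = 1) {t : ℝ}
    (ht₀ : 0 ≤ t) (ht : 2 * t ^ 2 ≤ 1) :
    uniformSphere n {x | t < inner ℝ (x : EuclideanSpace ℝ (Fin n)) v} ≤
      ENNReal.ofReal (exp (-(n * t ^ 2 / 2))) := by
  set s := √(1 - t ^ 2)
  have hcone : Set.Ioo (0 : ℝ) 1 • (Subtype.val ''
      {x : sphere (0 : EuclideanSpace ℝ (Fin n)) 1 | t < inner ℝ (x : EuclideanSpace ℝ (Fin n)) v})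
      ⊆ closedBall (t • v) s := by
    rintro _ ⟨r, ⟨hr₀, hr₁⟩, _, ⟨x, hx, rfl⟩, rfl⟩
    have hx₁ : ‖(x : EuclideanSpace ℝ (Fin n))‖ = 1 := norm_eq_of_mem_sphere x
    have hxv : t < inner ℝ (x : EuclideanSpace ℝ (Fin n)) v := hx
    rw [mem_closedBall, dist_eq_norm, Real.le_sqrt (norm_nonneg _) (by nlinarith),
      norm_sub_sq_real, norm_smul, norm_smul, hx₁, hv, real_inner_smul_left,
      real_inner_smul_right, Real.norm_of_nonneg hr₀.le, Real.norm_of_nonneg ht₀]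
    -- the bound is convex in `r` and holds at `r = 0` (as `2 t² ≤ 1`) and at `r = 1`
    nlinarith [mul_le_mul_of_nonneg_left hxv.le (mul_nonneg hr₀.le ht₀)]
  have hs : s ^ n ≤ exp (-(n * t ^ 2 / 2)) := by
    have hs₁ : s ≤ exp (-(t ^ 2 / 2)) := by
      rw [Real.sqrt_le_iff, ← Real.exp_nat_mul]
      refine ⟨(exp_pos _).le, ?_⟩
      calc 1 - t ^ 2 ≤ exp (-t ^ 2) := by linarith [add_one_le_exp (-t ^ 2)]
        _ = _ := by push_cast; ring_nf
    calc s ^ n ≤ exp (-(t ^ 2 / 2)) ^ n := by gcongr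
      _ = _ := by rw [← Real.exp_nat_mul]; ring_nf
  refine uniformSphere_le_of_volume_cone_le
    (isOpen_lt continuous_const (continuous_subtype_val.inner continuous_const)).measurableSet ?_
  calc _ ≤ volume (closedBall (t • v) s) := measure_mono hcone
    _ = ENNReal.ofReal (s ^ n) * volume (ball (0 : EuclideanSpace ℝ (Fin n)) 1) := by
      rw [Measure.addHaar_closedBall _ _ (sqrt_nonneg _), finrank_euclideanSpace_fin]
    _ ≤ ENNReal.ofReal (exp (-(n * t ^ 2 / 2))) *
        volume (ball (0 : EuclideanSpace ℝ (Fin n)) 1) := by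
      gcongr

theorem uniformSphere_exists_abs_gt_le [NeZero n] {t : ℝ} (ht₀ : 0 ≤ t) (ht : 2 * t ^ 2 ≤ 1) :
    uniformSphere n {x | ∃ i, t < |(x : EuclideanSpace ℝ (Fin n)) i|} ≤
      ENNReal.ofReal (2 * n * exp (-(n * t ^ 2 / 2))) := by
  let cap (v : EuclideanSpace ℝ (Fin n)) : Set (sphere (0 : EuclideanSpace ℝ (Fin n)) 1) :=
    {x | t < inner ℝ (x : EuclideanSpace ℝ (Fin n)) v}
  let caps (i : Fin n) := cap (EuclideanSpace.single i 1) ∪ cap (-EuclideanSpace.single i 1)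
  have hcover : {x : sphere (0 : EuclideanSpace ℝ (Fin n)) 1 |
      ∃ i, t < |(x : EuclideanSpace ℝ (Fin n)) i|} ⊆ ⋃ i, caps i := by
    rintro x ⟨i, hi⟩
    simp only [caps, cap, Set.mem_iUnion, Set.mem_union, Set.mem_ofPred_eq, inner_neg_right,
      EuclideanSpace.inner_single_right]
    exact ⟨i, by simpa [lt_neg] using lt_abs.mp hi⟩
  have hcap (v : EuclideanSpace ℝ (Fin n)) (hv : ‖v‖ = 1) :
      uniformSphere n (cap v) ≤ ENNReal.ofReal (exp (-(n * t ^ 2 / 2))) :=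
    uniformSphere_cap_le hv ht₀ ht
  have hsingle (i : Fin n) : ‖EuclideanSpace.single i (1 : ℝ)‖ = 1 := by simp
  calc _ ≤ uniformSphere n (⋃ i, caps i) := measure_mono hcover
    _ ≤ ∑ i, uniformSphere n (caps i) := measure_iUnion_fintype_le _ _
    _ ≤ ∑ _i : Fin n,
          (ENNReal.ofReal (exp (-(n * t ^ 2 / 2))) + ENNReal.ofReal (exp (-(n * t ^ 2 / 2)))) :=
        sum_le_sum fun i _ => (measure_union_le _ _).trans
          (add_le_add (hcap _ (hsingle i)) (hcap _ (by rw [norm_neg, hsingle i])))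
    _ = _ := by
      simp only [sum_const, card_univ, Fintype.card_fin, nsmul_eq_mul]
      rw [ENNReal.ofReal_mul (by positivity), ENNReal.ofReal_mul (by positivity),
        ENNReal.ofReal_natCast, ENNReal.ofReal_ofNat]
      ring

theorem eight_mul_log_le_self {x : ℝ} (hx : 64 ≤ x) : 8 * log x ≤ x := by
  have h₁ : log (x / 16) ≤ x / 16 - 1 := log_le_sub_one_of_pos (by positivity)
  have h₂ : log 16 < 2.8 := by
    rw [show (16 : ℝ) = 2 ^ 4 by norm_num, log_pow]
    linarith [log_two_lt_d9]
  rw [log_div (by positivity) (by norm_num)] at h₁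
  linarith

theorem exists_uniformSphere_exists_abs_gt_le (hn : 2 ≤ n) :
    ∃ t : ℝ, t * √n ≤ 10 * √(log n) ∧
      uniformSphere n {x | ∃ i, t < |(x : EuclideanSpace ℝ (Fin n)) i|} ≤ 1 / 4 := by
  have : NeZero n := ⟨by omega⟩
  have hn₀ : (0 : ℝ) < n := by positivity
  have hlog : 0.69 < log n :=
    (log_two_gt_d9.trans_le' (by norm_num)).trans_le (log_le_log two_pos (by exact_mod_cast hn))
  rcases lt_or_ge n 64 with hsmall | hlarge
  · refine ⟨1, ?_, ?_⟩
    · rw [one_mul, ← sqrt_sq (by norm_num : (0 : ℝ) ≤ 10), ← sqrt_mul (by norm_num)]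
      refine sqrt_le_sqrt ?_
      have : (n : ℝ) < 64 := by exact_mod_cast hsmall
      linarith
    · have hempty : {x : sphere (0 : EuclideanSpace ℝ (Fin n)) 1 |
          ∃ i, 1 < |(x : EuclideanSpace ℝ (Fin n)) i|} = ∅ :=
        Set.eq_empty_of_forall_notMem fun x ⟨i, hi⟩ =>
          hi.not_ge ((PiLp.norm_apply_le (x : EuclideanSpace ℝ (Fin n)) i).trans_eq
            (norm_eq_of_mem_sphere x))
      simp [hempty]
  · have h64 : (64 : ℝ) ≤ n := by exact_mod_cast hlarge
    set t := 2 * √(log n / n)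
    have ht₀ : 0 ≤ t := by positivity
    have ht : t ^ 2 = 4 * log n / n := by rw [mul_pow, sq_sqrt (by positivity)]; ring
    have h8 : 8 * log n ≤ n := eight_mul_log_le_self h64
    refine ⟨t, ?_, ?_⟩
    · rw [mul_assoc, ← sqrt_mul (by positivity), div_mul_cancel₀ _ hn₀.ne']
      linarith [sqrt_nonneg (log n)]
    have hexp : exp (-(n * t ^ 2 / 2)) = (n ^ 2 : ℝ)⁻¹ := by
      rw [ht, show (n : ℝ) * (4 * log n / n) / 2 = log (n ^ 2) by rw [log_pow]; field_simp; ring,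
        exp_neg, exp_log (by positivity)]
    have ht₁ : 2 * t ^ 2 ≤ 1 := by rw [ht, ← mul_div_assoc, div_le_one hn₀]; linarith
    refine (uniformSphere_exists_abs_gt_le ht₀ ht₁).trans ?_
    rw [hexp, ENNReal.ofReal_le_iff_le_toReal (by norm_num)]
    have : (2 : ℝ) * n * ((n : ℝ) ^ 2)⁻¹ = 2 / n := by field_simp
    rw [this, div_le_iff₀ hn₀]
    norm_num
    linarith

theorem volume_setOf_sum_abs_le [NeZero n] {R : ℝ} (hR : 0 ≤ R) :
    volume {y : EuclideanSpace ℝ (Fin n) | ∑ j, |y j| ≤ R} =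
      ENNReal.ofReal ((2 * R) ^ n / n !) := by
  have hset : MeasurableSet {y : Fin n → ℝ | (∑ j, |y j| ^ (1 : ℝ)) ^ (1 / (1 : ℝ)) ≤ R} :=
    measurableSet_le (by fun_prop) measurable_const
  have h := (EuclideanSpace.volume_preserving_symm_measurableEquiv_toLp (Fin n)).measure_preimage
    hset.nullMeasurableSet
  rw [volume_sum_rpow_le (Fin n) le_rfl R] at h
  simp only [rpow_one, div_one, Fintype.card_fin, one_add_one_eq_two, Gamma_two, mul_one,
    Gamma_nat_eq_factorial] at h
  rw [← ENNReal.ofReal_pow hR, ← ENNReal.ofReal_mul (by positivity)] at h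
  rw [show (2 * R) ^ n / n ! = R ^ n * (2 ^ n / n !) by ring]
  exact h

theorem ofReal_two_div_sqrt_pow_le_volume_ball [NeZero n] :
    ENNReal.ofReal ((2 / √n) ^ n) ≤ volume (ball (0 : EuclideanSpace ℝ (Fin n)) 1) := by
  set a := 1 / √n
  have hn₀ : (0 : ℝ) < n := by exact_mod_cast Nat.pos_of_neZero n
  have hcube : volume ((MeasurableEquiv.toLp 2 (Fin n → ℝ)).symm ⁻¹'
      Set.univ.pi fun _ => Set.Icc (-a) a) = ENNReal.ofReal ((2 / √n) ^ n) := by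
    rw [(EuclideanSpace.volume_preserving_symm_measurableEquiv_toLp (Fin n)).measure_preimage
      (MeasurableSet.univ_pi fun _ => measurableSet_Icc).nullMeasurableSet, volume_pi_pi]
    simp only [Real.volume_Icc, sub_neg_eq_add, prod_const, card_univ, Fintype.card_fin, a]
    rw [← ENNReal.ofReal_pow (by positivity)]
    congr 2
    ring
  rw [← hcube, ← Measure.addHaar_closedBall_eq_addHaar_ball]
  refine measure_mono fun x hx => ?_
  simp only [Set.mem_preimage, Set.mem_pi, Set.mem_univ, Set.mem_Icc, forall_const] at hx
  rw [mem_closedBall_zero_iff, EuclideanSpace.norm_eq, sqrt_le_one]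
  calc ∑ i, ‖x i‖ ^ 2 ≤ ∑ _i : Fin n, a ^ 2 :=
        sum_le_sum fun i _ => by
          rw [Real.norm_eq_abs, sq_abs]; exact sq_le_sq' (hx i).1 (hx i).2
    _ = 1 := by simp [a, sq_sqrt hn₀.le, hn₀.ne']

theorem div_six_pow_le_factorial_div_four (hn : 2 ≤ n) : ((n : ℝ) / 6) ^ n ≤ n ! / 4 := by
  have hfac : (n : ℝ) ^ n ≤ exp n * n ! := by
    have := pow_div_factorial_le_exp _ (Nat.cast_nonneg n) n
    rwa [div_le_iff₀ (by positivity)] at this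
  have he : exp (n : ℝ) ≤ 3 ^ n := by
    rw [← exp_one_pow]; gcongr; linarith [exp_one_lt_d9]
  have h4 : (4 : ℝ) ≤ 2 ^ n := by
    calc (4 : ℝ) = 2 ^ 2 := by norm_num
      _ ≤ 2 ^ n := pow_le_pow_right₀ (by norm_num) hn
  rw [div_pow, div_le_div_iff₀ (by positivity) (by norm_num), show (6 : ℝ) ^ n = 2 ^ n * 3 ^ n by
    rw [← mul_pow]; norm_num]
  calc (n : ℝ) ^ n * 4 ≤ 3 ^ n * n ! * 2 ^ n := by
        gcongr
        exact hfac.trans (by gcongr)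
    _ = _ := by ring

theorem uniformSphere_sum_abs_le_le (hn : 2 ≤ n) :
    uniformSphere n {x | ∑ j, |(x : EuclideanSpace ℝ (Fin n)) j| ≤ √n / 6} ≤ 1 / 4 := by
  have : NeZero n := ⟨by omega⟩
  have hn₀ : (0 : ℝ) < n := by positivity
  have hcone : Set.Ioo (0 : ℝ) 1 • (Subtype.val '' {x : sphere (0 : EuclideanSpace ℝ (Fin n)) 1 |
      ∑ j, |(x : EuclideanSpace ℝ (Fin n)) j| ≤ √n / 6}) ⊆ {y | ∑ j, |y j| ≤ √n / 6} := by
    rintro _ ⟨r, ⟨hr₀, hr₁⟩, _, ⟨x, hx, rfl⟩, rfl⟩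
    have hx : ∑ j, |(x : EuclideanSpace ℝ (Fin n)) j| ≤ √n / 6 := hx
    simp only [Set.mem_ofPred_eq, PiLp.smul_apply, smul_eq_mul, abs_mul, ← mul_sum,
      abs_of_pos hr₀]
    nlinarith [sum_nonneg fun j (_ : j ∈ univ) => abs_nonneg ((x : EuclideanSpace ℝ (Fin n)) j)]
  have hnum : (2 * (√n / 6)) ^ n / n ! ≤ 1 / 4 * (2 / √n) ^ n := by
    have hsq : 2 * (√n / 6) = 2 / √n * (n / 6) := by
      field_simp; rw [sq_sqrt hn₀.le]
    rw [hsq, mul_pow, div_le_iff₀ (by positivity)]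
    have := div_six_pow_le_factorial_div_four hn
    calc _ ≤ (2 / √n) ^ n * (n ! / 4) := by gcongr
      _ = _ := by ring
  refine uniformSphere_le_of_volume_cone_le ?_ ?_
  · exact (isClosed_le (continuous_finsetSum _ fun j _ =>
      ((EuclideanSpace.proj j).continuous.comp continuous_subtype_val).abs)
      continuous_const).measurableSet
  calc _ ≤ volume {y : EuclideanSpace ℝ (Fin n) | ∑ j, |y j| ≤ √n / 6} := measure_mono hcone
    _ = ENNReal.ofReal ((2 * (√n / 6)) ^ n / n !) := volume_setOf_sum_abs_le (by positivity)
    _ ≤ ENNReal.ofReal (1 / 4 * (2 / √n) ^ n) := ENNReal.ofReal_le_ofReal hnum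
    _ ≤ 1 / 4 * volume (ball (0 : EuclideanSpace ℝ (Fin n)) 1) := by
      rw [ENNReal.ofReal_mul (by norm_num),
        show ENNReal.ofReal (1 / 4) = 1 / 4 by rw [ENNReal.ofReal_div_of_pos (by norm_num)]; simp]
      gcongr
      exact ofReal_two_div_sqrt_pow_le_volume_ball

end UniformSphere

theorem exists_mem_notMem_of_measure_lt {α : Type*} [MeasurableSpace α] {μ : Measure α}
    {s t : Set α} (h : μ t < μ s) : ∃ x ∈ s, x ∉ t :=
  Set.not_subset.mp fun hst => (measure_mono hst).not_gt h

/-- Flat median lemma: there are absolute constants `λ₁, λ₂, γ > 0` such that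
for every normalized symmetric norm `l` on `ℝ^n` with `mmc(l) ≤ γ √n`
(expressed via the restrictions `l^{(k)}`), the normalized all-ones vector
`ξ = (1/√n)(1,…,1)` satisfies `λ₁ M / √(log n) ≤ l ξ ≤ λ₂ M`, where `M` is the
median of `l` on the unit sphere. -/
theorem flat_median_lemma :
    ∃ lam₁ lam₂ γ : ℝ, 0 < lam₁ ∧ 0 < lam₂ ∧ 0 < γ ∧
      ∀ n : ℕ, 2 ≤ n → ∀ l : EuclideanSpace ℝ (Fin n) → ℝ,
      (∀ x y, l (x + y) ≤ l x + l y) →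
      (∀ (c : ℝ) x, l (c • x) = |c| * l x) →
      (∀ x, l x = 0 ↔ x = 0) →
      (∀ (σ : Equiv.Perm (Fin n)) (x : EuclideanSpace ℝ (Fin n)),
        l (WithLp.toLp 2 (fun i => x (σ i))) = l x) →
      (∀ x : EuclideanSpace ℝ (Fin n), l (WithLp.toLp 2 (fun i => |x i|)) = l x) →
      (∀ i : Fin n, l (EuclideanSpace.single i 1) = 1) →
      ∀ M : ℝ,
      (1 / 2 : ℝ≥0∞) ≤ uniformSphere n {x | l ↑x ≤ M} →
      (1 / 2 : ℝ≥0∞) ≤ uniformSphere n {x | M ≤ l ↑x} →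
      -- `mmc(l) ≤ γ √n`: for every `1 ≤ k ≤ n`, the maximum of `l^{(k)}` on
      -- `S^{k-1}` is at most `γ √n` times any median of `l^{(k)}` on `S^{k-1}`
      (∀ k : ℕ, 0 < k → k ≤ n → ∀ bk Mk : ℝ,
        IsGreatest (restrictNorm l k '' sphere (0 : EuclideanSpace ℝ (Fin k)) 1) bk →
        (1 / 2 : ℝ≥0∞) ≤ uniformSphere k {y | restrictNorm l k ↑y ≤ Mk} →
        (1 / 2 : ℝ≥0∞) ≤ uniformSphere k {y | Mk ≤ restrictNorm l k ↑y} →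
        bk ≤ γ * Real.sqrt n * Mk) →
      lam₁ * M / Real.sqrt (Real.log n) ≤ l (WithLp.toLp 2 (fun _ => 1 / Real.sqrt n)) ∧
        l (WithLp.toLp 2 (fun _ => 1 / Real.sqrt n)) ≤ lam₂ * M := by
  refine ⟨1 / 10, 6, 1, by norm_num, by norm_num, by norm_num, ?_⟩
  intro n hn l htri hhom _ hperm habs _ M hM₁ hM₂ _
  have : NeZero n := ⟨by omega⟩
  let p : Seminorm ℝ (EuclideanSpace ℝ (Fin n)) :=
    Seminorm.of l htri fun c x => by rw [hhom, Real.norm_eq_abs]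
  change 1 / 10 * M / √(log n) ≤ p (flatVector n) ∧ p (flatVector n) ≤ 6 * M
  have hquarter : (1 / 4 : ℝ≥0∞) < 1 / 2 := by norm_num
  constructor
  · obtain ⟨t, ht, htail⟩ := exists_uniformSphere_exists_abs_gt_le hn
    obtain ⟨x, hxM, hxt⟩ := exists_mem_notMem_of_measure_lt ((htail.trans_lt hquarter).trans_le hM₂)
    simp only [Set.mem_ofPred_eq, not_exists, not_lt] at hxM hxt
    have hlog : 0 < √(log n) := sqrt_pos.mpr (log_pos (by exact_mod_cast hn))
    rw [div_le_iff₀ hlog]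
    calc 1 / 10 * M ≤ 1 / 10 * (t * √n * p (flatVector n)) := by
          gcongr; exact hxM.trans (p.apply_le_of_abs_le_const habs hxt)
      _ ≤ 1 / 10 * (10 * √(log n) * p (flatVector n)) := by gcongr
      _ = _ := by ring
  · obtain ⟨x, hxM, hx⟩ := exists_mem_notMem_of_measure_lt
      ((uniformSphere_sum_abs_le_le hn).trans_lt hquarter |>.trans_le hM₁)
    simp only [Set.mem_ofPred_eq, not_le] at hxM hx
    have hsqrt : 0 < √(n : ℝ) := by positivity
    refine le_of_mul_le_mul_left ?_ hsqrt
    calc √n * p (flatVector n) = 6 * (√n / 6 * p (flatVector n)) := by ring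
      _ ≤ 6 * ((∑ j, |(x : EuclideanSpace ℝ (Fin n)) j|) * p (flatVector n)) := by gcongr
      _ ≤ 6 * (√n * p x) :=
          mul_le_mul_of_nonneg_left (p.sum_abs_mul_apply_flatVector_le habs hperm x) (by norm_num)
      _ ≤ 6 * (√n * M) := by gcongr; exact hxM
      _ = √n * (6 * M) := by ring
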